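/- Let n ≥ 2, let (X,d) be a metric space with |X| ≥ n in which every point is an accumulation point, and let T : X → X be a mapping contracting total pairwise distance on n points with constant α ∈ [0,1). Then T is a contraction: d(Tx,Ty) ≤ α·d(x,y) for all x,y ∈ X. -/

import Mathlib

/-!
Fix `x ≠ y` and put `m = n - 2` further points `e₁, …, eₘ` within `ε` of `y`, all distinct.
The configuration `(x, y, e₁, …, eₘ)` is then `ε`-close to the degenerate one `(x, y, …, y)`,
whose total pairwise distance is `(n - 1) d(x, y)`. The same construction with `ε = d(x, y)`
shows that `T` is Lipschitz, so `T` moves the configuration `O(ε)`-close to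
`(Tx, Ty, …, Ty)` as well. The hypothesis therefore gives
`(n - 1) d(Tx, Ty) ≤ α (n - 1) d(x, y) + O(ε)`, and `ε → 0` finishes the proof.
-/

noncomputable def totalS {X : Type*} [MetricSpace X] {n : ℕ} (x : Fin n → X) : ℝ :=
  ∑ i : Fin n, ∑ j ∈ Finset.Ioi i, dist (x i) (x j)

open Finset Function Filter Topology

lemma le_of_forall_pos_le_add_mul {a b c : ℝ} (h : ∀ ε > 0, a ≤ b + c * ε) : a ≤ b := by
  have hlim : Tendsto (fun ε => b + c * ε) (𝓝[>] 0) (𝓝 b) := by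
    have hcont : Continuous fun ε : ℝ => b + c * ε := by fun_prop
    simpa using (hcont.tendsto 0).mono_left nhdsWithin_le_nhds
  exact ge_of_tendsto hlim (eventually_nhdsWithin_of_forall h)

lemma Set.Infinite.exists_injective_fin {X : Type*} {t : Set X} (ht : t.Infinite) (m : ℕ) :
    ∃ e : Fin m → X, Injective e ∧ ∀ k, e k ∈ t :=
  ⟨fun k => ht.natEmbedding t k,
    Subtype.val_injective.comp ((ht.natEmbedding t).injective.comp Fin.val_injective),
    fun k => (ht.natEmbedding t k).2⟩

lemma Fin.cons_cons_injective {X : Type*} {m : ℕ} {a b : X} {e : Fin m → X} (hab : a ≠ b)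
    (he : Injective e) (ha : ∀ k, e k ≠ a) (hb : ∀ k, e k ≠ b) :
    Injective (Fin.cons a (Fin.cons b e) : Fin (m + 2) → X) := by
  rw [Fin.cons_injective_iff, Fin.cons_injective_iff, Fin.range_cons]
  refine ⟨?_, fun ⟨k, hk⟩ => hb k hk, he⟩
  rintro (h | ⟨k, hk⟩)
  exacts [hab h, ha k hk]

section totalS

variable {X : Type*} [MetricSpace X] {n : ℕ}

lemma dist_le_totalS (x : Fin n → X) {i j : Fin n} (hij : i < j) :
    dist (x i) (x j) ≤ totalS x :=
  calc dist (x i) (x j) ≤ ∑ k ∈ Ioi i, dist (x i) (x k) :=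
        single_le_sum (fun _ _ => dist_nonneg) (mem_Ioi.mpr hij)
    _ ≤ totalS x :=
        single_le_sum (f := fun i => ∑ j ∈ Ioi i, dist (x i) (x j))
          (fun _ _ => sum_nonneg fun _ _ => dist_nonneg) (mem_univ i)

lemma totalS_cons (a : X) (x : Fin n → X) :
    totalS (Fin.cons a x : Fin (n + 1) → X) = ∑ j, dist a (x j) + totalS x := by
  simp only [totalS, Fin.sum_univ_succ, Fin.sum_Ioi_zero, Fin.sum_Ioi_succ, Fin.cons_zero,
    Fin.cons_succ]

lemma totalS_const (a : X) : totalS (fun _ : Fin n => a) = 0 := by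
  simp [totalS]

lemma totalS_cons_const (a b : X) :
    totalS (Fin.cons a fun _ : Fin n => b : Fin (n + 1) → X) = n * dist a b := by
  simp [totalS_cons, totalS_const]

lemma totalS_le_add_of_dist_le {x y : Fin n → X} {δ : ℝ} (hδ : 0 ≤ δ)
    (h : ∀ i, dist (x i) (y i) ≤ δ) : totalS x ≤ totalS y + n ^ 2 * (2 * δ) := by
  have hcount : ∑ i : Fin n, ∑ _j ∈ Ioi i, 2 * δ ≤ n ^ 2 * (2 * δ) :=
    calc ∑ i : Fin n, ∑ _j ∈ Ioi i, 2 * δ ≤ ∑ _i : Fin n, ∑ _j : Fin n, 2 * δ :=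
          sum_le_sum fun i _ => sum_le_sum_of_subset_of_nonneg (subset_univ _)
            fun _ _ _ => by positivity
      _ = n ^ 2 * (2 * δ) := by simp; ring
  calc totalS x ≤ ∑ i, ∑ j ∈ Ioi i, (dist (y i) (y j) + 2 * δ) := by
        refine sum_le_sum fun i _ => sum_le_sum fun j _ => ?_
        linarith [dist_triangle4 (x i) (y i) (y j) (x j), h i, h j, dist_comm (y j) (x j)]
    _ ≤ totalS y + n ^ 2 * (2 * δ) := by
        simp only [sum_add_distrib, totalS]
        linarith

end totalS

def ContractsTotalS {X : Type*} [MetricSpace X] (n : ℕ) (T : X → X) (α : ℝ) : Prop :=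
  ∀ x : Fin n → X, Injective x → totalS (T ∘ x) ≤ α * totalS x

section ContractsTotalS

variable {X : Type*} [MetricSpace X] {m : ℕ} {T : X → X} {α : ℝ}

lemma ContractsTotalS.dist_apply_le (hα0 : 0 ≤ α) (hT : ContractsTotalS (m + 2) T α)
    (hacc : ∀ x : X, ∀ r : ℝ, 0 < r → (Metric.ball x r).Infinite) (x y : X) :
    dist (T x) (T y) ≤ α * ((m + 2) ^ 2 * 2) * dist x y := by
  rcases eq_or_ne x y with rfl | hxy
  · simp
  set d := dist x y
  obtain ⟨e, he, he_mem⟩ :=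
    ((hacc y d (dist_pos.mpr hxy)).sdiff (Set.toFinite {x, y})).exists_injective_fin m
  have hne : ∀ k, e k ≠ x ∧ e k ≠ y := fun k => by simpa using (he_mem k).2
  set a : Fin (m + 2) → X := Fin.cons x (Fin.cons y e)
  have ha : Injective a := Fin.cons_cons_injective hxy he (fun k => (hne k).1) fun k => (hne k).2
  have ha_near : ∀ i, dist (a i) y ≤ d := by
    refine Fin.cases le_rfl (Fin.cases (by simp [a, d]) fun k => ?_)
    exact (Metric.mem_ball.mp (he_mem k).1).le
  calc dist (T x) (T y) = dist ((T ∘ a) 0) ((T ∘ a) 1) := rfl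
    _ ≤ totalS (T ∘ a) := dist_le_totalS _ Fin.zero_lt_one
    _ ≤ α * totalS a := hT a ha
    _ ≤ α * (totalS (fun _ => y) + (m + 2 : ℕ) ^ 2 * (2 * d)) :=
        mul_le_mul_of_nonneg_left (totalS_le_add_of_dist_le dist_nonneg ha_near) hα0
    _ = α * ((m + 2) ^ 2 * 2) * d := by rw [totalS_const]; push_cast; ring

lemma ContractsTotalS.mul_dist_apply_le_add (hα0 : 0 ≤ α) (hT : ContractsTotalS (m + 2) T α)
    (hacc : ∀ x : X, ∀ r : ℝ, 0 < r → (Metric.ball x r).Infinite) {x y : X} (hxy : x ≠ y)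
    {ε : ℝ} (hε : 0 < ε) :
    (m + 1) * dist (T x) (T y) ≤
      (m + 1) * (α * dist x y) + 2 * (m + 2) ^ 2 * α * (1 + 2 * (m + 2) ^ 2) * ε := by
  obtain ⟨e, he, he_mem⟩ :=
    ((hacc y ε hε).sdiff (Set.toFinite {x, y})).exists_injective_fin m
  have hne : ∀ k, e k ≠ x ∧ e k ≠ y := fun k => by simpa using (he_mem k).2
  set g : Fin (m + 2) → X := Fin.cons x (Fin.cons y e)
  set v : Fin (m + 2) → X := Fin.cons x fun _ => y
  have hg : Injective g := Fin.cons_cons_injective hxy he (fun k => (hne k).1) fun k => (hne k).2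
  have hgv : ∀ i, dist (g i) (v i) ≤ ε := by
    refine Fin.cases (by simp [g, v, hε.le]) (Fin.cases (by simp [g, v, hε.le]) fun k => ?_)
    exact (Metric.mem_ball.mp (he_mem k).1).le
  have hTgv : ∀ i, dist (T (v i)) (T (g i)) ≤ α * ((m + 2) ^ 2 * 2) * ε := fun i => by
    rw [dist_comm]
    exact (hT.dist_apply_le hα0 hacc _ _).trans
      (mul_le_mul_of_nonneg_left (hgv i) (by positivity))
  have hTv : T ∘ v = Fin.cons (T x) fun _ => T y := Fin.comp_cons ..
  calc (m + 1) * dist (T x) (T y) = totalS (T ∘ v) := by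
        rw [hTv, totalS_cons_const]; push_cast; ring
    _ ≤ totalS (T ∘ g) + (m + 2 : ℕ) ^ 2 * (2 * (α * ((m + 2) ^ 2 * 2) * ε)) :=
        totalS_le_add_of_dist_le (by positivity) hTgv
    _ ≤ α * (totalS v + (m + 2 : ℕ) ^ 2 * (2 * ε)) +
          (m + 2 : ℕ) ^ 2 * (2 * (α * ((m + 2) ^ 2 * 2) * ε)) := by
        gcongr
        exact (hT g hg).trans (mul_le_mul_of_nonneg_left (totalS_le_add_of_dist_le hε.le hgv) hα0)
    _ = (m + 1) * (α * dist x y) + 2 * (m + 2) ^ 2 * α * (1 + 2 * (m + 2) ^ 2) * ε := by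
        rw [totalS_cons_const]; push_cast; ring

end ContractsTotalS

theorem stmt_9_general {X : Type*} [MetricSpace X] (n : ℕ) (hn : 2 ≤ n)
    (T : X → X) (α : ℝ) (hα0 : 0 ≤ α)
    (hT : ∀ x : Fin n → X, Function.Injective x → totalS (T ∘ x) ≤ α * totalS x)
    (hacc : ∀ x : X, ∀ r : ℝ, 0 < r → (Metric.ball x r).Infinite) :
    ∀ x y : X, dist (T x) (T y) ≤ α * dist x y := by
  obtain ⟨m, rfl⟩ : ∃ m, n = m + 2 := ⟨n - 2, by omega⟩
  intro x y
  rcases eq_or_ne x y with rfl | hxy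
  · simp
  refine le_of_mul_le_mul_left (a := (m + 1 : ℝ)) ?_ (by positivity)
  exact le_of_forall_pos_le_add_mul fun ε hε =>
    ContractsTotalS.mul_dist_apply_le_add hα0 hT hacc hxy hε

theorem stmt_9 {X : Type*} [MetricSpace X] (n : ℕ) (hn : 2 ≤ n)
    (hcard : ∃ f : Fin n → X, Function.Injective f)
    (T : X → X) (α : ℝ) (hα0 : 0 ≤ α) (hα1 : α < 1)
    (hT : ∀ x : Fin n → X, Function.Injective x → totalS (T ∘ x) ≤ α * totalS x)
    (hacc : ∀ x : X, ∀ r : ℝ, 0 < r → (Metric.ball x r).Infinite) :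
    ∀ x y : X, dist (T x) (T y) ≤ α * dist x y :=
  stmt_9_general n hn T α hα0 hT hacc
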